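/- Let r, μ ∈ ℤ⁺ and λ, σ be such that σ^{−1} ∈ ℤ⁺, λ is a positive integer multiple of 5, λσ is a positive integer multiple of 5, and 40σr ≤ 1. Then for every t and all k, k' ∈ Λ: (i) P_{[λ/2, 2λ]} w_{k,λ,σ,r,μ}(t,·) = w_{k,λ,σ,r,μ}(t,·); (ii) if k + k' ≠ 0 then P_{[λ/5, 4λ]}( w_{k,λ,σ,r,μ}(t,·) ⊘ w_{k',λ,σ,r,μ}(t,·) ) = w_{k,λ,σ,r,μ}(t,·) ⊘ w_{k',λ,σ,r,μ}(t,·); (iii) P_{≥ λσ/2}( w_{k,λ,σ,r,μ}(t,·) ⊘ w_{k',λ,σ,r,μ}(t,·) ) = P_{≠0}( w_{k,λ,σ,r,μ}(t,·) ⊘ w_{k',λ,σ,r,μ}(t,·) ); and (iv) P_{≠0} η_{k,λ,σ,r,μ}(t,·) = P_{≥ λσ/2} η_{k,λ,σ,r,μ}(t,·). Here the projectors act on each matrix or vector entry in the spatial variable. -/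

import Mathlib

open MeasureTheory Real Filter Matrix
open scoped ENNReal NNReal

noncomputable section

/-- Points of the torus `𝕋² = ℝ²/(2πℤ)²` are represented by points of `ℝ²`;
functions on `𝕋²` are `2π`-periodic functions on `ℝ²`. -/
abbrev Vec2 := Fin 2 → ℝ

/-- The `j`-th standard basis vector of `ℝ²`. -/
def e2 (j : Fin 2) : Vec2 := Pi.single j 1

/-- A fundamental domain for `𝕋²`. -/
def Q2 : Set Vec2 := Set.univ.pi fun _ => Set.Ioc (0:ℝ) (2*π)

/-- Lebesgue measure on `𝕋²`, realized on the fundamental domain. -/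
def μT : Measure Vec2 := volume.restrict Q2

/-- `2π`-periodicity in each coordinate: a function on `𝕋²`. -/
def Per {α : Type*} (f : Vec2 → α) : Prop :=
  ∀ (x : Vec2) (j : Fin 2), f (x + (2*π) • e2 j) = f x

/-- Divergence of a vector field. -/
def divg (f : Vec2 → Vec2) (x : Vec2) : ℝ := ∑ j, fderiv ℝ (fun y => f y j) x (e2 j)

/-- `e^{iξ·x}` for a frequency `ξ ∈ ℤ²`. -/
def eFreq (ξ : ℤ × ℤ) (x : Vec2) : ℂ :=
  Complex.exp (Complex.I * ((ξ.1 * x 0 + ξ.2 * x 1 : ℝ) : ℂ))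

/-- Fourier coefficient of a (periodic) function on `𝕋²`. -/
def fCoeff (f : Vec2 → ℂ) (ξ : ℤ × ℤ) : ℂ :=
  (4*π^2 : ℝ)⁻¹ * ∫ x in Q2, f x * eFreq (-ξ) x

/-- Euclidean norm of a frequency `ξ ∈ ℤ²`. -/
def freqNorm (ξ : ℤ × ℤ) : ℝ := Real.sqrt ((ξ.1:ℝ)^2 + (ξ.2:ℝ)^2)

/-- The fractional Laplacian `(−Δ)^θ`, defined via Fourier series:
`((−Δ)^θ f)^(ξ) = |ξ|^{2θ} f̂(ξ)`. -/
def fracLap (θ : ℝ) (f : Vec2 → ℂ) (x : Vec2) : ℂ :=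
  ∑' ξ : ℤ × ℤ, ((freqNorm ξ ^ (2*θ) : ℝ) : ℂ) * fCoeff f ξ * eFreq ξ x

/-- The fractional Laplacian of a real-valued function. -/
def fracLapR (θ : ℝ) (f : Vec2 → ℝ) (x : Vec2) : ℝ :=
  (fracLap θ (fun y => (f y : ℂ)) x).re

/-- The set `Λ⁺` of direction vectors. -/
def Λp : Finset Vec2 :=
  { ![3/5, 4/5], ![3/5, -4/5], ![4/5, 3/5], ![4/5, -3/5] }

/-- The set `Λ⁻ = −Λ⁺`. -/
def Λm : Finset Vec2 := Λp.image (fun k => -k)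

/-- The set of directions `Λ = Λ⁺ ∪ Λ⁻`. -/
def Λdir : Finset Vec2 := Λp ∪ Λm

/-- `k⊥ = (−k₂, k₁)`. -/
def perp (k : Vec2) : Vec2 := ![-(k 1), k 0]

/-- Trace-free part of the tensor product of two real vectors:
`f ⊘ g = f ⊗ g − ½(f·g) I₂`. -/
def ot (f g : Vec2) : Fin 2 → Fin 2 → ℝ :=
  fun i j => f i * g j - (if i = j then (f ⬝ᵥ g) / 2 else 0)

/-- Trace-free part of the tensor product of two complex vectors. -/
def otC (f g : Fin 2 → ℂ) : Fin 2 → Fin 2 → ℂ :=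
  fun i j => f i * g j - (if i = j then (f ⬝ᵥ g) / 2 else 0)

/-- The 2D stationary flow `b_{k,λ}(x) = i k⊥ e^{iλ k·x}`. -/
def bflow (k : Vec2) (l : ℝ) (x : Vec2) : Fin 2 → ℂ :=
  fun i => Complex.I * ((perp k i : ℝ) : ℂ) * Complex.exp (Complex.I * ((l * (k ⬝ᵥ x) : ℝ) : ℂ))

/-- Its potential `ψ_{k,λ}(x) = λ⁻¹ e^{iλ k·x}`. -/
def ψflow (k : Vec2) (l : ℝ) (x : Vec2) : ℂ :=
  ((l : ℂ))⁻¹ * Complex.exp (Complex.I * ((l * (k ⬝ᵥ x) : ℝ) : ℂ))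

/-- Partial derivative `∂_j` of a complex-valued function on `ℝ²`. -/
def pdC (j : Fin 2) (f : Vec2 → ℂ) : Vec2 → ℂ := fun x => fderiv ℝ f x (e2 j)

/-- The index set `Ω_r = {k ∈ ℤ² : |k₁| ≤ r, |k₂| ≤ r}`. -/
def Ωr (r : ℕ) : Finset (ℤ × ℤ) := Finset.Icc (-(r:ℤ)) r ×ˢ Finset.Icc (-(r:ℤ)) r

/-- The 2D Dirichlet kernel `D_r(x) = (2r+1)⁻¹ Σ_{k∈Ω_r} e^{ik·x}` on `𝕋²`. -/
def Dker (r : ℕ) (x : Vec2) : ℂ :=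
  (((2*(r:ℝ)+1) : ℝ) : ℂ)⁻¹ *
    ∑ k ∈ Ωr r, Complex.exp (Complex.I * (((k.1 : ℝ) * x 0 + (k.2 : ℝ) * x 1 : ℝ) : ℂ))

/-- The 2D Dirichlet kernel as a real-valued function of two real arguments. -/
def DkerR (r : ℕ) (a b : ℝ) : ℝ :=
  ((((2*(r:ℝ)+1) : ℝ) : ℂ)⁻¹ *
    ∑ k ∈ Ωr r, Complex.exp (Complex.I * (((k.1 : ℝ) * a + (k.2 : ℝ) * b : ℝ) : ℂ))).re

/-- The directed–rescaled Dirichlet kernel with temporal shift: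
`η_{k,λ,σ,r,μ}(t,x) = D_r(λσ(k·x + μt), λσ k⊥·x)` for `k ∈ Λ⁺`, and
`η_{k,λ,σ,r,μ} = η_{−k,λ,σ,r,μ}` for `k ∈ Λ⁻`. -/
def ηfun (k : Vec2) (l σ : ℝ) (r : ℕ) (μ : ℝ) (t : ℝ) (x : Vec2) : ℝ :=
  if k ∈ Λp then
    DkerR r (l * σ * (k ⬝ᵥ x + μ * t)) (l * σ * (perp k ⬝ᵥ x))
  else
    DkerR r (l * σ * ((-k) ⬝ᵥ x + μ * t)) (l * σ * (perp (-k) ⬝ᵥ x))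

/-- The intermittent 2D stationary flow `w_{k,λ,σ,r,μ}(t,x) = η_{k,λ,σ,r,μ}(t,x) b_{k,λ}(x)`. -/
def wflow (k : Vec2) (l σ : ℝ) (r : ℕ) (μ : ℝ) (t : ℝ) (x : Vec2) : Fin 2 → ℂ :=
  fun i => ((ηfun k l σ r μ t x : ℝ) : ℂ) * bflow k l x i

/-- The Fourier projector `P_{[λ₁,λ₂]}` onto frequencies `λ₁ ≤ |ξ| ≤ λ₂`. -/
def Pband (l1 l2 : ℝ) (f : Vec2 → ℂ) (x : Vec2) : ℂ :=
  ∑' ξ : ℤ × ℤ, if l1 ≤ freqNorm ξ ∧ freqNorm ξ ≤ l2 then fCoeff f ξ * eFreq ξ x else 0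

/-- The Fourier projector `P_{≥λ}` onto frequencies `|ξ| ≥ λ`. -/
def Pge (l : ℝ) (f : Vec2 → ℂ) (x : Vec2) : ℂ :=
  ∑' ξ : ℤ × ℤ, if l ≤ freqNorm ξ then fCoeff f ξ * eFreq ξ x else 0

/-- The projector `P_{≠0} f = f − ⨍ f` removing the mean. -/
def Pne0 (f : Vec2 → ℂ) (x : Vec2) : ℂ :=
  f x - (4*π^2 : ℝ)⁻¹ * ∫ y in Q2, f y

/-! All the functions involved are trigonometric polynomials, and a Fourier projector acts on
such a polynomial by discarding the frequencies outside its range, so everything reduces to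
locating frequencies. Write `k = (a, b)/5`, `λ = 5 nₗ` and `λσ = 5 n_σ`. The kernel `η_k` has
frequencies `n_σ (m₁ (a, b) + m₂ (-b, a))`, `m ∈ Ω_r`: a copy of `Ω_r` rotated and scaled by `λσ`,
whose nonzero points have length at least `λσ` and at most `√2 λσ r ≤ √2 λ / 40`. Multiplying by
`b_k` shifts them by `λk`, of length `λ`, and `w_k ⊘ w_{k'}` has frequencies in `λ(k + k')` plus
twice this small set. As `5(k + k')` is an integer vector with even coordinate sum,
`|λ(k + k')| ≥ √2 λ / 5` unless `k + k' = 0`, when the product stays in the scaled lattice. -/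

open Pointwise

def trigPoly (S : Set (ℤ × ℤ)) : Submodule ℂ (Vec2 → ℂ) := Submodule.span ℂ (eFreq '' S)

lemma eFreq_add (ξ ζ : ℤ × ℤ) (x : Vec2) : eFreq (ξ + ζ) x = eFreq ξ x * eFreq ζ x := by
  simp only [eFreq, ← Complex.exp_add, Prod.fst_add, Prod.snd_add]
  push_cast
  ring_nf

lemma eFreq_zero : eFreq 0 = 1 := by
  ext x
  simp [eFreq]

@[fun_prop]
lemma continuous_eFreq (ξ : ℤ × ℤ) : Continuous (eFreq ξ) := by
  unfold eFreq
  fun_prop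

lemma integrableOn_Q2 {f : Vec2 → ℂ} (hf : Continuous f) : IntegrableOn f Q2 := by
  have hK : IsCompact (Set.univ.pi fun _ : Fin 2 => Set.Icc (0:ℝ) (2*π)) :=
    isCompact_univ_pi fun _ => isCompact_Icc
  refine (hf.continuousOn.integrableOn_compact hK).mono_set ?_
  exact Set.pi_mono fun _ _ => Set.Ioc_subset_Icc_self

lemma integral_exp_int_mul_Ioc (n : ℤ) :
    ∫ x in Set.Ioc (0:ℝ) (2*π), Complex.exp (Complex.I * n * x)
      = if n = 0 then ((2*π : ℝ) : ℂ) else 0 := by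
  have h2π : (0:ℝ) ≤ 2 * π := by positivity
  split_ifs with hn
  · simp [hn, max_eq_left h2π]
  · rw [← intervalIntegral.integral_of_le h2π,
      integral_exp_mul_complex (by simp [hn] : Complex.I * n ≠ 0)]
    have : Complex.I * n * ((2*π : ℝ) : ℂ) = n * (2 * π * Complex.I) := by push_cast; ring
    rw [this, Complex.exp_int_mul_two_pi_mul_I]
    simp

lemma integral_eFreq (ξ : ℤ × ℤ) :
    ∫ x in Q2, eFreq ξ x = if ξ = 0 then ((4*π^2 : ℝ) : ℂ) else 0 := by
  have hQ : Q2 = MeasurableEquiv.finTwoArrow ⁻¹' (Set.Ioc (0:ℝ) (2*π) ×ˢ Set.Ioc (0:ℝ) (2*π)) := by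
    ext x
    simp [Q2, Set.mem_pi, MeasurableEquiv.finTwoArrow, Fin.forall_fin_two]
  have hprod : ∫ x in Q2, eFreq ξ x = ∫ p in Set.Ioc (0:ℝ) (2*π) ×ˢ Set.Ioc (0:ℝ) (2*π),
      Complex.exp (Complex.I * ξ.1 * p.1) * Complex.exp (Complex.I * ξ.2 * p.2) := by
    rw [hQ, ← (volume_preserving_finTwoArrow ℝ).setIntegral_preimage_emb
      MeasurableEquiv.finTwoArrow.measurableEmbedding]
    congr 1 with x
    simp only [eFreq, ← Complex.exp_add, MeasurableEquiv.finTwoArrow_apply]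
    push_cast
    ring_nf
  rw [hprod, Measure.volume_eq_prod, setIntegral_prod_mul
    (fun a : ℝ => Complex.exp (Complex.I * ξ.1 * a))
    (fun b : ℝ => Complex.exp (Complex.I * ξ.2 * b)),
    integral_exp_int_mul_Ioc, integral_exp_int_mul_Ioc]
  obtain ⟨ξ1, ξ2⟩ := ξ
  by_cases h1 : ξ1 = 0 <;> by_cases h2 : ξ2 = 0 <;> simp [h1, h2]; ring

lemma fCoeff_eFreq (ζ ξ : ℤ × ℤ) : fCoeff (eFreq ζ) ξ = if ζ = ξ then 1 else 0 := by
  have hπ : (4*π^2 : ℝ) ≠ 0 := by positivity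
  simp only [fCoeff, ← eFreq_add, integral_eFreq, add_neg_eq_zero]
  split_ifs
  · push_cast at hπ ⊢
    field_simp
  · simp

lemma fCoeff_linearCombination (c : (ℤ × ℤ) →₀ ℂ) :
    fCoeff (Finsupp.linearCombination ℂ eFreq c) = c := by
  ext ξ
  have hint : ∀ ζ ∈ c.support, IntegrableOn (fun x => c ζ * eFreq ζ x * eFreq (-ξ) x) Q2 :=
    fun ζ _ => integrableOn_Q2 (by fun_prop)
  have hlin : fCoeff (Finsupp.linearCombination ℂ eFreq c) ξ
      = ∑ ζ ∈ c.support, c ζ * fCoeff (eFreq ζ) ξ := by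
    simp only [fCoeff, Finsupp.linearCombination_apply, Finsupp.sum, Finset.sum_apply,
      Pi.smul_apply, smul_eq_mul, Finset.sum_mul]
    rw [integral_finsetSum _ hint, Finset.mul_sum]
    refine Finset.sum_congr rfl fun ζ _ => ?_
    simp only [mul_assoc, integral_const_mul]
    ring
  simp only [hlin, fCoeff_eFreq, mul_ite, mul_one, mul_zero, Finset.sum_ite_eq',
    Finsupp.mem_support_iff, ite_not]
  split_ifs with h <;> simp [h]

lemma fCoeff_eq_zero_of_mem_trigPoly {S : Set (ℤ × ℤ)} {f : Vec2 → ℂ} (hf : f ∈ trigPoly S)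
    {ξ : ℤ × ℤ} (hξ : ξ ∉ S) : fCoeff f ξ = 0 := by
  obtain ⟨c, hc, rfl⟩ := (Finsupp.mem_span_image_iff_linearCombination ℂ).1 hf
  rw [fCoeff_linearCombination]
  exact Finsupp.notMem_support_iff.1 fun h => hξ (hc h)

lemma hasSum_fCoeff_mul_eFreq {S : Set (ℤ × ℤ)} {f : Vec2 → ℂ} (hf : f ∈ trigPoly S)
    (x : Vec2) : HasSum (fun ξ => fCoeff f ξ * eFreq ξ x) (f x) := by
  obtain ⟨c, -, rfl⟩ := (Finsupp.mem_span_image_iff_linearCombination ℂ).1 hf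
  rw [fCoeff_linearCombination, Finsupp.linearCombination_apply, Finsupp.sum, Finset.sum_apply]
  exact hasSum_sum_of_ne_finset_zero fun ξ hξ => by simp [Finsupp.notMem_support_iff.1 hξ]

lemma Pne0_eq_sub_fCoeff_zero (f : Vec2 → ℂ) (x : Vec2) : Pne0 f x = f x - fCoeff f 0 := by
  simp [Pne0, fCoeff, eFreq_zero]

lemma Pband_eq_self_of_mem_trigPoly {S : Set (ℤ × ℤ)} {f : Vec2 → ℂ} (hf : f ∈ trigPoly S)
    {l1 l2 : ℝ} (hS : ∀ ξ ∈ S, l1 ≤ freqNorm ξ ∧ freqNorm ξ ≤ l2) (x : Vec2) :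
    Pband l1 l2 f x = f x := by
  refine ((hasSum_fCoeff_mul_eFreq hf x).congr_fun fun ξ => ?_).tsum_eq
  by_cases hξ : ξ ∈ S
  · exact if_pos (hS ξ hξ)
  · simp [fCoeff_eq_zero_of_mem_trigPoly hf hξ]

lemma Pge_eq_Pne0_of_mem_trigPoly {S : Set (ℤ × ℤ)} {f : Vec2 → ℂ} (hf : f ∈ trigPoly S)
    {L : ℝ} (hL : 0 < L) (hS : ∀ ξ ∈ S, ξ ≠ 0 → L ≤ freqNorm ξ) (x : Vec2) :
    Pge L f x = Pne0 f x := by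
  have hsum := (hasSum_fCoeff_mul_eFreq hf x).sub (hasSum_ite_eq 0 (fCoeff f 0))
  rw [Pne0_eq_sub_fCoeff_zero]
  refine (hsum.congr_fun fun ξ => ?_).tsum_eq
  by_cases h0 : ξ = 0
  · subst h0
    simp [freqNorm, hL.not_ge, eFreq_zero]
  by_cases hξ : ξ ∈ S
  · simp [h0, hS ξ hξ h0]
  · simp [h0, fCoeff_eq_zero_of_mem_trigPoly hf hξ]

lemma eFreq_mem_trigPoly {S : Set (ℤ × ℤ)} {ξ : ℤ × ℤ} (hξ : ξ ∈ S) : eFreq ξ ∈ trigPoly S :=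
  Submodule.subset_span (Set.mem_image_of_mem _ hξ)

lemma mul_mem_trigPoly {S S' : Set (ℤ × ℤ)} {f g : Vec2 → ℂ} (hf : f ∈ trigPoly S)
    (hg : g ∈ trigPoly S') : f * g ∈ trigPoly (S + S') := by
  have hle : trigPoly S * trigPoly S' ≤ trigPoly (S + S') := by
    rw [trigPoly, trigPoly, Submodule.span_mul_span]
    refine Submodule.span_le.2 ?_
    rintro _ ⟨_, ⟨ξ, hξ, rfl⟩, _, ⟨ζ, hζ, rfl⟩, rfl⟩
    have : eFreq ξ * eFreq ζ = eFreq (ξ + ζ) := funext fun x => (eFreq_add ξ ζ x).symm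
    simpa only [this, SetLike.mem_coe] using eFreq_mem_trigPoly (Set.add_mem_add hξ hζ)
  exact hle (Submodule.mul_mem_mul hf hg)

lemma otC_mem_trigPoly {S S' : Set (ℤ × ℤ)} {f g : Vec2 → Fin 2 → ℂ}
    (hf : ∀ i, (fun y => f y i) ∈ trigPoly S) (hg : ∀ j, (fun y => g y j) ∈ trigPoly S')
    (i j : Fin 2) : (fun y => otC (f y) (g y) i j) ∈ trigPoly (S + S') := by
  have hprod : ∀ i j, (fun y => f y i * g y j) ∈ trigPoly (S + S') :=
    fun i j => mul_mem_trigPoly (hf i) (hg j)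
  have hdot : (fun y => f y ⬝ᵥ g y / 2) ∈ trigPoly (S + S') := by
    have : (fun y => f y ⬝ᵥ g y / 2)
        = (2⁻¹ : ℂ) • ((fun y => f y 0 * g y 0) + fun y => f y 1 * g y 1) := by
      ext y
      simp [dotProduct, Fin.sum_univ_two, div_eq_inv_mul]
    rw [this]
    exact Submodule.smul_mem _ _ (add_mem (hprod 0 0) (hprod 1 1))
  unfold otC
  split_ifs
  · exact sub_mem (hprod i j) hdot
  · simpa using hprod i j

def toE : ℤ × ℤ →+ EuclideanSpace ℝ (Fin 2) :=
  AddMonoidHom.mk' (fun ξ => WithLp.toLp 2 ![(ξ.1 : ℝ), ξ.2]) fun ξ ζ => by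
    ext i
    fin_cases i <;> simp

lemma freqNorm_eq_norm (ξ : ℤ × ℤ) : freqNorm ξ = ‖toE ξ‖ := by
  simp [freqNorm, toE, EuclideanSpace.norm_eq, Fin.sum_univ_two]

lemma freqNorm_add_le (ξ ζ : ℤ × ℤ) : freqNorm (ξ + ζ) ≤ freqNorm ξ + freqNorm ζ := by
  simpa only [freqNorm_eq_norm, map_add] using norm_add_le (toE ξ) (toE ζ)

lemma freqNorm_le_freqNorm_add_add (ξ ζ : ℤ × ℤ) : freqNorm ζ ≤ freqNorm (ξ + ζ) + freqNorm ξ := by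
  simpa only [freqNorm_eq_norm, map_add] using norm_le_add_norm_add' (toE ξ) (toE ζ)

lemma freqNorm_nsmul (n : ℕ) (ξ : ℤ × ℤ) : freqNorm (n • ξ) = n * freqNorm ξ := by
  rw [freqNorm_eq_norm, freqNorm_eq_norm, map_nsmul, ← Nat.cast_smul_eq_nsmul ℝ, norm_smul,
    Real.norm_natCast]

lemma freqNorm_of_sq_add_sq {a b : ℤ} {c : ℝ} (hc : 0 ≤ c) (h : (a : ℝ) ^ 2 + b ^ 2 = c ^ 2) :
    freqNorm (a, b) = c := by
  rw [freqNorm, h, Real.sqrt_sq hc]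

lemma one_le_freqNorm {ξ : ℤ × ℤ} (hξ : ξ ≠ 0) : 1 ≤ freqNorm ξ := by
  obtain ⟨a, b⟩ := ξ
  have hab : 1 ≤ a ^ 2 + b ^ 2 := by
    by_contra! h
    have ha : a = 0 := by nlinarith [sq_nonneg a, sq_nonneg b]
    have hb : b = 0 := by nlinarith [sq_nonneg a, sq_nonneg b]
    exact hξ (by simp [ha, hb])
  rw [freqNorm, ← Real.sqrt_one]
  exact Real.sqrt_le_sqrt (by exact_mod_cast hab)

lemma freqNorm_le_of_mem_Ωr {r : ℕ} {m : ℤ × ℤ} (hm : m ∈ Ωr r) :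
    freqNorm m ≤ √2 * r := by
  simp only [Ωr, Finset.mem_product, Finset.mem_Icc] at hm
  have h1 : (m.1 : ℝ) ^ 2 ≤ (r : ℝ) ^ 2 :=
    sq_le_sq' (by exact_mod_cast hm.1.1) (by exact_mod_cast hm.1.2)
  have h2 : (m.2 : ℝ) ^ 2 ≤ (r : ℝ) ^ 2 :=
    sq_le_sq' (by exact_mod_cast hm.2.1) (by exact_mod_cast hm.2.2)
  calc freqNorm m ≤ √(2 * (r : ℝ) ^ 2) := Real.sqrt_le_sqrt (by linarith)
    _ = √2 * r := by rw [Real.sqrt_mul zero_le_two, Real.sqrt_sq (Nat.cast_nonneg r)]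

lemma neg_mem_Ωr {r : ℕ} {m : ℤ × ℤ} (hm : m ∈ Ωr r) : -m ∈ Ωr r := by
  simp only [Ωr, Finset.mem_product, Finset.mem_Icc, Prod.fst_neg, Prod.snd_neg] at hm ⊢
  omega

/-- Multiplication by `p` in the Gaussian integers `ℤ[i] ≅ ℤ²`. -/
def rotFreq (p : ℤ × ℤ) : ℤ × ℤ →+ ℤ × ℤ :=
  AddMonoidHom.mk' (fun m => (m.1 * p.1 - m.2 * p.2, m.1 * p.2 + m.2 * p.1)) fun m m' => by
    ext <;> simp <;> ring

lemma rotFreq_neg (p m : ℤ × ℤ) : rotFreq (-p) m = rotFreq p (-m) := by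
  ext <;> simp [rotFreq]

lemma freqNorm_rotFreq (p m : ℤ × ℤ) : freqNorm (rotFreq p m) = freqNorm p * freqNorm m := by
  simp only [freqNorm, rotFreq, AddMonoidHom.mk'_apply]
  rw [← Real.sqrt_mul (by positivity)]
  congr 1
  push_cast
  ring

lemma image_rotFreq_neg_Ωr (p : ℤ × ℤ) (r : ℕ) :
    rotFreq (-p) '' Ωr r = rotFreq p '' Ωr r := by
  ext ξ
  constructor <;> rintro ⟨m, hm, rfl⟩ <;> refine ⟨-m, neg_mem_Ωr hm, ?_⟩
  · rw [rotFreq_neg]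
  · rw [rotFreq_neg, neg_neg]

lemma freqNorm_le_of_mem_image_Ωr {p ξ : ℤ × ℤ} {r : ℕ} (hξ : ξ ∈ rotFreq p '' Ωr r) :
    freqNorm ξ ≤ √2 * r * freqNorm p := by
  obtain ⟨m, hm, rfl⟩ := hξ
  rw [freqNorm_rotFreq, mul_comm]
  exact mul_le_mul_of_nonneg_right (freqNorm_le_of_mem_Ωr hm) (Real.sqrt_nonneg _)

lemma le_freqNorm_of_mem_range {p ξ : ℤ × ℤ} (hξ : ξ ∈ (rotFreq p).range) (h0 : ξ ≠ 0) :
    freqNorm p ≤ freqNorm ξ := by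
  obtain ⟨m, rfl⟩ := hξ
  have hm : m ≠ 0 := by rintro rfl; exact h0 (map_zero _)
  rw [freqNorm_rotFreq]
  exact le_mul_of_one_le_right (Real.sqrt_nonneg _) (one_le_freqNorm hm)

lemma DkerR_ofReal (r : ℕ) (a b : ℝ) :
    ((DkerR r a b : ℝ) : ℂ) = (((2*(r:ℝ)+1) : ℝ) : ℂ)⁻¹ *
      ∑ m ∈ Ωr r, Complex.exp (Complex.I * (((m.1 : ℝ) * a + (m.2 : ℝ) * b : ℝ) : ℂ)) := by
  rw [DkerR, ← Complex.conj_eq_iff_re, map_mul, map_inv₀, Complex.conj_ofReal, map_sum]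
  congr 1
  -- conjugation is the reflection `m ↦ -m` of the symmetric index set `Ωr r`
  refine Finset.sum_nbij' Neg.neg Neg.neg (fun m hm => neg_mem_Ωr hm) (fun m hm => neg_mem_Ωr hm)
    (fun m _ => neg_neg m) (fun m _ => neg_neg m) fun m _ => ?_
  rw [← Complex.exp_conj, map_mul, Complex.conj_I, Complex.conj_ofReal]
  push_cast [Prod.fst_neg, Prod.snd_neg]
  ring_nf

lemma DkerR_mem_trigPoly (r : ℕ) (p : ℤ × ℤ) (α : ℝ) :
    (fun x : Vec2 => ((DkerR r (α + (p.1 * x 0 + p.2 * x 1)) (-p.2 * x 0 + p.1 * x 1) : ℝ) : ℂ))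
      ∈ trigPoly (rotFreq p '' Ωr r) := by
  have hsum : (fun x : Vec2 => ((DkerR r (α + (p.1 * x 0 + p.2 * x 1)) (-p.2 * x 0 + p.1 * x 1)
      : ℝ) : ℂ)) = ∑ m ∈ Ωr r, ((((2*(r:ℝ)+1) : ℝ) : ℂ)⁻¹ *
        Complex.exp (Complex.I * ((m.1 * α : ℝ) : ℂ))) • eFreq (rotFreq p m) := by
    ext x
    simp only [DkerR_ofReal, Finset.mul_sum, Finset.sum_apply, Pi.smul_apply, smul_eq_mul,
      mul_assoc, eFreq, rotFreq, AddMonoidHom.mk'_apply, ← Complex.exp_add]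
    refine Finset.sum_congr rfl fun m _ => ?_
    push_cast
    ring_nf
  rw [hsum]
  exact Submodule.sum_mem _ fun m hm =>
    Submodule.smul_mem _ _ (eFreq_mem_trigPoly (Set.mem_image_of_mem _ hm))

lemma ηfun_mem_trigPoly {k : Vec2} {a b : ℤ} {l σ : ℝ} {nσ : ℕ} (hk : k = ![(a : ℝ) / 5, b / 5])
    (hlσ : l * σ = 5 * nσ) (r : ℕ) (μ t : ℝ) :
    (fun x => ((ηfun k l σ r μ t x : ℝ) : ℂ)) ∈ trigPoly (rotFreq (nσ • (a, b)) '' Ωr r) := by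
  unfold ηfun
  split_ifs
  · convert DkerR_mem_trigPoly r (nσ • (a, b)) (l * σ * (μ * t)) using 4 with x
    · simp [hk, dotProduct, Fin.sum_univ_two, hlσ]; ring
    · simp [hk, perp, dotProduct, Fin.sum_univ_two, hlσ]; ring
  · rw [← image_rotFreq_neg_Ωr]
    convert DkerR_mem_trigPoly r (-(nσ • (a, b))) (l * σ * (μ * t)) using 4 with x
    · simp [hk, dotProduct, Fin.sum_univ_two, hlσ]; ring
    · simp [hk, perp, dotProduct, Fin.sum_univ_two, hlσ]; ring

lemma bflow_mem_trigPoly {k : Vec2} {a b : ℤ} {l : ℝ} {nl : ℕ} (hk : k = ![(a : ℝ) / 5, b / 5])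
    (hl : l = 5 * nl) (i : Fin 2) :
    (fun x => bflow k l x i) ∈ trigPoly {nl • (a, b)} := by
  have : (fun x => bflow k l x i) = (Complex.I * ((perp k i : ℝ) : ℂ)) • eFreq (nl • (a, b)) := by
    ext x
    simp only [bflow, eFreq, hk, hl, dotProduct, Fin.sum_univ_two, Pi.smul_apply, smul_eq_mul,
      Prod.smul_mk]
    push_cast [nsmul_eq_mul]
    ring_nf
  rw [this]
  exact Submodule.smul_mem _ _ (eFreq_mem_trigPoly rfl)

lemma wflow_mem_trigPoly {k : Vec2} {a b : ℤ} {l σ : ℝ} {nl nσ : ℕ} (hk : k = ![(a : ℝ) / 5, b / 5])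
    (hl : l = 5 * nl) (hlσ : l * σ = 5 * nσ) (r : ℕ) (μ t : ℝ) (i : Fin 2) :
    (fun x => wflow k l σ r μ t x i)
      ∈ trigPoly (rotFreq (nσ • (a, b)) '' Ωr r + {nl • (a, b)}) :=
  mul_mem_trigPoly (ηfun_mem_trigPoly hk hlσ r μ t) (bflow_mem_trigPoly hk hl i)

lemma exists_int_of_mem_Λdir {k : Vec2} (hk : k ∈ Λdir) :
    ∃ a b : ℤ, k = ![(a : ℝ) / 5, b / 5] ∧ a ^ 2 + b ^ 2 = 25 ∧ Odd (a + b) := by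
  simp only [Λdir, Λm, Λp, Finset.mem_union, Finset.mem_insert, Finset.mem_singleton,
    Finset.mem_image] at hk
  rcases hk with (rfl | rfl | rfl | rfl) | ⟨_, (rfl | rfl | rfl | rfl), rfl⟩
  · exact ⟨3, 4, by norm_num, by norm_num, by decide⟩
  · exact ⟨3, -4, by norm_num, by norm_num, by decide⟩
  · exact ⟨4, 3, by norm_num, by norm_num, by decide⟩
  · exact ⟨4, -3, by norm_num, by norm_num, by decide⟩
  · exact ⟨-3, -4, by ext i; fin_cases i <;> norm_num, by norm_num, by decide⟩
  · exact ⟨-3, 4, by ext i; fin_cases i <;> norm_num, by norm_num, by decide⟩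
  · exact ⟨-4, -3, by ext i; fin_cases i <;> norm_num, by norm_num, by decide⟩
  · exact ⟨-4, 3, by ext i; fin_cases i <;> norm_num, by norm_num, by decide⟩

lemma two_le_sq_add_sq_of_even_add {x y : ℤ} (hxy : Even (x + y)) (h0 : (x, y) ≠ 0) :
    2 ≤ x ^ 2 + y ^ 2 := by
  have hpos : 0 < x ^ 2 + y ^ 2 := by
    rcases ne_or_eq x 0 with hx | rfl
    · positivity
    · have hy : y ≠ 0 := fun hy => h0 (by simp [hy])
      positivity
  obtain ⟨c, hc⟩ : Even (x ^ 2 + y ^ 2) := by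
    have : x ^ 2 + y ^ 2 = (x + y) ^ 2 - 2 * (x * y) := by ring
    rw [this]
    exact (Even.pow_of_ne_zero hxy two_ne_zero).sub (even_two_mul _)
  omega

lemma freqNorm_nsmul_of_sq_add_sq {a b : ℤ} (hab : a ^ 2 + b ^ 2 = 25) (n : ℕ) :
    freqNorm (n • (a, b)) = 5 * n := by
  rw [freqNorm_nsmul, freqNorm_of_sq_add_sq (c := 5) (by norm_num) (by exact_mod_cast hab),
    mul_comm]

lemma freqNorm_le_of_mem_rescaled_Ωr {a b : ℤ} (hab : a ^ 2 + b ^ 2 = 25) {l σ : ℝ}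
    {nσ r : ℕ} (hl : 0 ≤ l) (hlσ : l * σ = 5 * nσ) (hσr : 40 * σ * r ≤ 1) {ζ : ℤ × ℤ}
    (hζ : ζ ∈ rotFreq (nσ • (a, b)) '' Ωr r) : freqNorm ζ ≤ √2 * l / 40 := by
  have hζ' := freqNorm_le_of_mem_image_Ωr hζ
  rw [freqNorm_nsmul_of_sq_add_sq hab, ← hlσ] at hζ'
  have : l * σ * r ≤ l / 40 := by nlinarith [mul_le_of_le_one_right hl hσr]
  calc freqNorm ζ ≤ √2 * (l * σ * r) := by linarith
    _ ≤ √2 * l / 40 := by rw [mul_div_assoc]; gcongr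

lemma Pband_wflow {k : Vec2} (hk : k ∈ Λdir) {l σ : ℝ} {nl nσ r : ℕ} (hl : l = 5 * nl)
    (hlσ : l * σ = 5 * nσ) (hσr : 40 * σ * r ≤ 1) (μ t : ℝ) (i : Fin 2) (x : Vec2) :
    Pband (l / 2) (2 * l) (fun y => wflow k l σ r μ t y i) x = wflow k l σ r μ t x i := by
  obtain ⟨a, b, rfl, hab, -⟩ := exists_int_of_mem_Λdir hk
  have hl0 : 0 ≤ l := by rw [hl]; positivity
  refine Pband_eq_self_of_mem_trigPoly (wflow_mem_trigPoly rfl hl hlσ r μ t i) ?_ x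
  rintro _ ⟨ζ, hζ, _, rfl, rfl⟩
  dsimp only
  have hζl := freqNorm_le_of_mem_rescaled_Ωr hab hl0 hlσ hσr hζ
  have hν : freqNorm (nl • (a, b)) = l := by rw [freqNorm_nsmul_of_sq_add_sq hab, hl]
  have hup := freqNorm_add_le ζ (nl • (a, b))
  have hlow := freqNorm_le_freqNorm_add_add ζ (nl • (a, b))
  have := Real.sqrt_two_lt_three_halves
  constructor <;> nlinarith

lemma freqNorm_mem_band_of_add_ne_zero {a b a' b' : ℤ} (hab : a ^ 2 + b ^ 2 = 25)
    (hab' : a' ^ 2 + b' ^ 2 = 25) (hodd : Odd (a + b)) (hodd' : Odd (a' + b'))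
    (hne : (a + a', b + b') ≠ 0) {l σ : ℝ} {nl nσ r : ℕ} (hl : l = 5 * nl)
    (hlσ : l * σ = 5 * nσ) (hσr : 40 * σ * r ≤ 1) {ξ : ℤ × ℤ}
    (hξ : ξ ∈ (rotFreq (nσ • (a, b)) '' Ωr r + {nl • (a, b)})
      + (rotFreq (nσ • (a', b')) '' Ωr r + {nl • (a', b')})) :
    l / 5 ≤ freqNorm ξ ∧ freqNorm ξ ≤ 4 * l := by
  obtain ⟨_, ⟨ζ, hζ, _, rfl, rfl⟩, _, ⟨ζ', hζ', _, rfl, rfl⟩, rfl⟩ := hξ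
  dsimp only
  have hl0 : 0 ≤ l := by rw [hl]; positivity
  have hζl := freqNorm_le_of_mem_rescaled_Ωr hab hl0 hlσ hσr hζ
  have hζl' := freqNorm_le_of_mem_rescaled_Ωr hab' hl0 hlσ hσr hζ'
  have hsplit : ζ + nl • (a, b) + (ζ' + nl • (a', b'))
      = (ζ + ζ') + nl • (a + a', b + b') := by
    rw [← Prod.mk_add_mk, smul_add]; abel
  have hνν : √2 * l / 5 ≤ freqNorm (nl • (a + a', b + b')) := by
    have heven : Even (a + a' + (b + b')) := by
      rw [add_add_add_comm]; exact hodd.add_odd hodd'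
    have h2 : (2 : ℝ) ≤ ((a + a' : ℤ) : ℝ) ^ 2 + ((b + b' : ℤ) : ℝ) ^ 2 := by
      exact_mod_cast two_le_sq_add_sq_of_even_add heven hne
    rw [freqNorm_nsmul, hl, freqNorm]
    have := Real.sqrt_le_sqrt h2
    nlinarith [Nat.cast_nonneg (α := ℝ) nl]
  have hνν' : freqNorm (nl • (a + a', b + b')) ≤ 2 * l := by
    rw [← Prod.mk_add_mk, smul_add]
    have := freqNorm_add_le (nl • (a, b)) (nl • (a', b'))
    rw [freqNorm_nsmul_of_sq_add_sq hab, freqNorm_nsmul_of_sq_add_sq hab'] at this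
    linarith
  have hζζ := freqNorm_add_le ζ ζ'
  rw [hsplit]
  have hup := freqNorm_add_le (ζ + ζ') (nl • (a + a', b + b'))
  have hlow := freqNorm_le_freqNorm_add_add (ζ + ζ') (nl • (a + a', b + b'))
  have hsqrt2 : (4 : ℝ) / 3 ≤ √2 := Real.le_sqrt_of_sq_le (by norm_num)
  have := mul_le_mul_of_nonneg_right hsqrt2 hl0
  have := Real.sqrt_two_lt_three_halves
  constructor <;> nlinarith

lemma mul_le_freqNorm_of_mem_range {a b : ℤ} (hab : a ^ 2 + b ^ 2 = 25) {l σ : ℝ} {nσ : ℕ}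
    (hlσ : l * σ = 5 * nσ) {ξ : ℤ × ℤ} (hξ : ξ ∈ (rotFreq (nσ • (a, b))).range) (h0 : ξ ≠ 0) :
    l * σ ≤ freqNorm ξ := by
  rw [hlσ, ← freqNorm_nsmul_of_sq_add_sq hab]
  exact le_freqNorm_of_mem_range hξ h0

lemma prod_add_ne_zero_of_vec_add_ne_zero {a b a' b' : ℤ}
    (h : ![(a : ℝ) / 5, b / 5] + ![(a' : ℝ) / 5, b' / 5] ≠ 0) : (a + a', b + b') ≠ 0 := by
  contrapose! h
  simp only [Prod.mk_eq_zero] at h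
  ext i
  fin_cases i
  · simp [← add_div, ← Int.cast_add, h.1]
  · simp [← add_div, ← Int.cast_add, h.2]

lemma Pband_otC_wflow {k k' : Vec2} (hk : k ∈ Λdir) (hk' : k' ∈ Λdir) (hkk : k + k' ≠ 0)
    {l σ : ℝ} {nl nσ r : ℕ} (hl : l = 5 * nl) (hlσ : l * σ = 5 * nσ) (hσr : 40 * σ * r ≤ 1)
    (μ t : ℝ) (i j : Fin 2) (x : Vec2) :
    Pband (l / 5) (4 * l) (fun y => otC (wflow k l σ r μ t y) (wflow k' l σ r μ t y) i j) x
      = otC (wflow k l σ r μ t x) (wflow k' l σ r μ t x) i j := by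
  obtain ⟨a, b, rfl, hab, hodd⟩ := exists_int_of_mem_Λdir hk
  obtain ⟨a', b', rfl, hab', hodd'⟩ := exists_int_of_mem_Λdir hk'
  exact Pband_eq_self_of_mem_trigPoly
    (otC_mem_trigPoly (wflow_mem_trigPoly rfl hl hlσ r μ t)
      (wflow_mem_trigPoly rfl hl hlσ r μ t) i j)
    (fun ξ hξ => freqNorm_mem_band_of_add_ne_zero hab hab' hodd hodd'
      (prod_add_ne_zero_of_vec_add_ne_zero hkk) hl hlσ hσr hξ) x

lemma Pge_otC_wflow {k k' : Vec2} (hk : k ∈ Λdir) (hk' : k' ∈ Λdir) {l σ : ℝ} {nl nσ r : ℕ}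
    (hl : l = 5 * nl) (hlσ : l * σ = 5 * nσ) (hnσ : 0 < nσ) (hr : 0 < r)
    (hσr : 40 * σ * r ≤ 1) (μ t : ℝ) (i j : Fin 2) (x : Vec2) :
    Pge (l * σ / 2) (fun y => otC (wflow k l σ r μ t y) (wflow k' l σ r μ t y) i j) x
      = Pne0 (fun y => otC (wflow k l σ r μ t y) (wflow k' l σ r μ t y) i j) x := by
  obtain ⟨a, b, rfl, hab, hodd⟩ := exists_int_of_mem_Λdir hk
  have hlσ0 : 0 < l * σ := by rw [hlσ]; positivity
  by_cases hkk : ![(a : ℝ) / 5, b / 5] + k' = 0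
  · -- `k' = -k`: the carrier frequencies `±λk` cancel, leaving points of the rotated lattice
    have hk'_eq : k' = ![((-a : ℤ) : ℝ) / 5, ((-b : ℤ) : ℝ) / 5] := by
      rw [eq_neg_of_add_eq_zero_right hkk]
      ext i; fin_cases i <;> simp [neg_div]
    refine Pge_eq_Pne0_of_mem_trigPoly (otC_mem_trigPoly (wflow_mem_trigPoly rfl hl hlσ r μ t)
      (wflow_mem_trigPoly hk'_eq hl hlσ r μ t) i j) (by positivity) ?_ x
    rintro _ ⟨_, ⟨ζ, ⟨m, -, rfl⟩, _, rfl, rfl⟩, _, ⟨ζ', hζ', _, rfl, rfl⟩, rfl⟩ h0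
    have hneg : nσ • (-a, -b) = -(nσ • (a, b)) := by rw [← smul_neg, Prod.neg_mk]
    rw [hneg, image_rotFreq_neg_Ωr] at hζ'
    obtain ⟨m', -, rfl⟩ := hζ'
    have hsum : rotFreq (nσ • (a, b)) m + nl • (a, b) + (rotFreq (nσ • (a, b)) m' + nl • (-a, -b))
        = rotFreq (nσ • (a, b)) (m + m') := by
      rw [map_add, ← Prod.neg_mk, smul_neg]; abel
    dsimp only at h0 ⊢
    rw [hsum] at h0 ⊢
    linarith [mul_le_freqNorm_of_mem_range hab hlσ ⟨m + m', rfl⟩ h0]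
  · obtain ⟨a', b', rfl, hab', hodd'⟩ := exists_int_of_mem_Λdir hk'
    have hl0 : 0 ≤ l := by rw [hl]; positivity
    have hlσl : l * σ ≤ l / 40 := by
      have : (1 : ℝ) ≤ r := by exact_mod_cast hr
      nlinarith [mul_le_of_le_one_right hl0 hσr]
    refine Pge_eq_Pne0_of_mem_trigPoly (otC_mem_trigPoly (wflow_mem_trigPoly rfl hl hlσ r μ t)
      (wflow_mem_trigPoly rfl hl hlσ r μ t) i j) (by positivity) (fun ξ hξ _ => ?_) x
    have := (freqNorm_mem_band_of_add_ne_zero hab hab' hodd hodd'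
      (prod_add_ne_zero_of_vec_add_ne_zero hkk) hl hlσ hσr hξ).1
    linarith

lemma Pne0_ηfun {k : Vec2} (hk : k ∈ Λdir) {l σ : ℝ} {nσ : ℕ} (hlσ : l * σ = 5 * nσ)
    (hnσ : 0 < nσ) (r : ℕ) (μ t : ℝ) (x : Vec2) :
    Pne0 (fun y => ((ηfun k l σ r μ t y : ℝ) : ℂ)) x
      = Pge (l * σ / 2) (fun y => ((ηfun k l σ r μ t y : ℝ) : ℂ)) x := by
  obtain ⟨a, b, rfl, hab, -⟩ := exists_int_of_mem_Λdir hk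
  have hlσ0 : 0 < l * σ := by rw [hlσ]; positivity
  refine (Pge_eq_Pne0_of_mem_trigPoly (ηfun_mem_trigPoly rfl hlσ r μ t) (by positivity)
    (fun ξ hξ h0 => ?_) x).symm
  obtain ⟨m, -, rfl⟩ := hξ
  linarith [mul_le_freqNorm_of_mem_range hab hlσ ⟨m, rfl⟩ h0]

theorem statement16_general (r μ : ℕ) (hr : 0 < r) (l σ : ℝ)
    (hl : ∃ n : ℕ, 0 < n ∧ l = 5 * n)
    (hlσ : ∃ n : ℕ, 0 < n ∧ l * σ = 5 * n)
    (hσr : 40 * σ * r ≤ 1) :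
    (∀ k ∈ Λdir, ∀ (t : ℝ) (i : Fin 2) (x : Vec2),
      Pband (l/2) (2*l) (fun y => wflow k l σ r (μ:ℝ) t y i) x
        = wflow k l σ r (μ:ℝ) t x i) ∧
    (∀ k ∈ Λdir, ∀ k' ∈ Λdir, k + k' ≠ 0 →
      ∀ (t : ℝ) (i j : Fin 2) (x : Vec2),
        Pband (l/5) (4*l)
          (fun y => otC (wflow k l σ r (μ:ℝ) t y) (wflow k' l σ r (μ:ℝ) t y) i j) x
        = otC (wflow k l σ r (μ:ℝ) t x) (wflow k' l σ r (μ:ℝ) t x) i j) ∧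
    (∀ k ∈ Λdir, ∀ k' ∈ Λdir, ∀ (t : ℝ) (i j : Fin 2) (x : Vec2),
      Pge (l*σ/2)
          (fun y => otC (wflow k l σ r (μ:ℝ) t y) (wflow k' l σ r (μ:ℝ) t y) i j) x
        = Pne0
          (fun y => otC (wflow k l σ r (μ:ℝ) t y) (wflow k' l σ r (μ:ℝ) t y) i j) x) ∧
    (∀ k ∈ Λdir, ∀ (t : ℝ) (x : Vec2),
      Pne0 (fun y => ((ηfun k l σ r (μ:ℝ) t y : ℝ) : ℂ)) x
        = Pge (l*σ/2) (fun y => ((ηfun k l σ r (μ:ℝ) t y : ℝ) : ℂ)) x) := by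
  obtain ⟨nl, -, hl⟩ := hl
  obtain ⟨nσ, hnσ, hlσ⟩ := hlσ
  exact ⟨fun k hk t i x => Pband_wflow hk hl hlσ hσr μ t i x,
    fun k hk k' hk' hkk t i j x => Pband_otC_wflow hk hk' hkk hl hlσ hσr μ t i j x,
    fun k hk k' hk' t i j x => Pge_otC_wflow hk hk' hl hlσ hnσ hr hσr μ t i j x,
    fun k hk t x => Pne0_ηfun hk hlσ hnσ r μ t x⟩

/-- Frequency localization of the intermittent flows:
`P_{[λ/2,2λ]} w_k = w_k`; `P_{[λ/5,4λ]}(w_k ⊘ w_{k'}) = w_k ⊘ w_{k'}` for `k+k' ≠ 0`;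
`P_{≥λσ/2}(w_k ⊘ w_{k'}) = P_{≠0}(w_k ⊘ w_{k'})`; and `P_{≠0} η_k = P_{≥λσ/2} η_k`. -/
theorem statement16 (r μ : ℕ) (hr : 0 < r) (hμ : 0 < μ) (l σ : ℝ)
    (hσ : ∃ n : ℕ, 0 < n ∧ σ⁻¹ = (n : ℝ))
    (hl : ∃ n : ℕ, 0 < n ∧ l = 5 * n)
    (hlσ : ∃ n : ℕ, 0 < n ∧ l * σ = 5 * n)
    (hσr : 40 * σ * r ≤ 1) :
    (∀ k ∈ Λdir, ∀ (t : ℝ) (i : Fin 2) (x : Vec2),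
      Pband (l/2) (2*l) (fun y => wflow k l σ r (μ:ℝ) t y i) x
        = wflow k l σ r (μ:ℝ) t x i) ∧
    (∀ k ∈ Λdir, ∀ k' ∈ Λdir, k + k' ≠ 0 →
      ∀ (t : ℝ) (i j : Fin 2) (x : Vec2),
        Pband (l/5) (4*l)
          (fun y => otC (wflow k l σ r (μ:ℝ) t y) (wflow k' l σ r (μ:ℝ) t y) i j) x
        = otC (wflow k l σ r (μ:ℝ) t x) (wflow k' l σ r (μ:ℝ) t x) i j) ∧
    (∀ k ∈ Λdir, ∀ k' ∈ Λdir, ∀ (t : ℝ) (i j : Fin 2) (x : Vec2),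
      Pge (l*σ/2)
          (fun y => otC (wflow k l σ r (μ:ℝ) t y) (wflow k' l σ r (μ:ℝ) t y) i j) x
        = Pne0
          (fun y => otC (wflow k l σ r (μ:ℝ) t y) (wflow k' l σ r (μ:ℝ) t y) i j) x) ∧
    (∀ k ∈ Λdir, ∀ (t : ℝ) (x : Vec2),
      Pne0 (fun y => ((ηfun k l σ r (μ:ℝ) t y : ℝ) : ℂ)) x
        = Pge (l*σ/2) (fun y => ((ηfun k l σ r (μ:ℝ) t y : ℝ) : ℂ)) x) :=
  statement16_general r μ hr l σ hl hlσ hσr
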